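/- Let 1 ≤ k < m, let (λ_1, u_1), …, (λ_k, u_k) be exact eigenpairs of A (A u_i = λ_i u_i) with λ_1 ≤ ⋯ ≤ λ_k, and set μ_i = 1/λ_i. Assume δ_{k,i} := min_{k<j≤m} |μ̃_j − μ_i| > 0 for 1 ≤ i ≤ k. Let E_{m,k} be the A-orthogonal projection onto span{ũ_1, …, ũ_k}. Then for each 1 ≤ i ≤ k: ‖u_i − E_{m,k} u_i‖_A ≤ √(1 + (μ̃_{k+1}/δ_{k,i}²) η_K²) · ‖(I − P_K) u_i‖_A. -/

import Mathlib

/-!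
Put `w = u - P u` and `c_j = (u, ũ_j)_A`. Then `u - E u = w + ∑_{j > k} c_j ũ_j`, and the sum lies
in `K`, which is `A`-orthogonal to `w`; hence `‖u - E u‖_A² = ‖w‖_A² + ∑_{j > k} c_j²`.

Testing the Ritz equations and `A u = λ u` against `ũ_j` gives `(ũ_j, w) = c_j (μ - μ̃_j)`, so
the gap `|μ - μ̃_j| ≥ δ` and `λ̃_j ≥ λ̃_{k+1}` give
`∑_{j > k} c_j² ≤ μ̃_{k+1}/δ² · ∑_{j > k} λ̃_j (ũ_j, w)²`.
Since `w` is `A`-orthogonal to `K`, every `g` satisfies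
`(g, w) = (A⁻¹g - P A⁻¹g, w)_A ≤ η_K ‖g‖₂ ‖w‖_A`. The vectors `√λ̃_j ũ_j` are `L²`-orthonormal,
so `g = ∑_{j > k} λ̃_j (ũ_j, w) ũ_j` has `(g, w) = ‖g‖₂²` equal to the last sum, which is
therefore at most `η_K² ‖w‖_A²`.
-/

open Matrix

/-- The Euclidean (`L²`) norm on `ℝⁿ`: `‖x‖₂ = √(xᵀx)`. -/
noncomputable def l2N {n : ℕ} (x : Fin n → ℝ) : ℝ := Real.sqrt (x ⬝ᵥ x)

/-- The energy norm induced by the matrix `A`: `‖x‖_A = √(xᵀAx)`. -/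
noncomputable def aN {n : ℕ} (A : Matrix (Fin n) (Fin n) ℝ) (x : Fin n → ℝ) : ℝ :=
  Real.sqrt (x ⬝ᵥ (A *ᵥ x))

/-- `η_K = sup_{‖g‖₂ = 1} ‖(I - P_K) A⁻¹ g‖_A`, where `P` is the `A`-orthogonal
projection onto the subspace `K`. -/
noncomputable def etaK {n : ℕ} (A : Matrix (Fin n) (Fin n) ℝ)
    (P : (Fin n → ℝ) →ₗ[ℝ] (Fin n → ℝ)) : ℝ :=
  sSup ((fun g => aN A ((A⁻¹ *ᵥ g) - P (A⁻¹ *ᵥ g))) '' {g | l2N g = 1})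

section EnergyInnerProduct

variable {n : ℕ} {A : Matrix (Fin n) (Fin n) ℝ}

theorem dotProduct_mulVec_comm_of_isSymm (hA : A.IsSymm) (x y : Fin n → ℝ) :
    x ⬝ᵥ A *ᵥ y = y ⬝ᵥ A *ᵥ x := by
  rw [← dotProduct_transpose_mulVec, hA.eq]

theorem Matrix.PosSemidef.isSymm (hA : A.PosSemidef) : A.IsSymm :=
  isHermitian_iff_isSymm.1 hA.isHermitian

theorem Matrix.PosSemidef.dotProduct_mulVec_self_nonneg (hA : A.PosSemidef) (x : Fin n → ℝ) :
    0 ≤ x ⬝ᵥ A *ᵥ x := by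
  simpa using hA.dotProduct_mulVec_nonneg x

theorem aN_sq (hA : A.PosSemidef) (x : Fin n → ℝ) : aN A x ^ 2 = x ⬝ᵥ A *ᵥ x :=
  Real.sq_sqrt (hA.dotProduct_mulVec_self_nonneg x)

theorem aN_smul {c : ℝ} (hc : 0 ≤ c) (x : Fin n → ℝ) : aN A (c • x) = c * aN A x := by
  rw [aN, aN, mulVec_smul, smul_dotProduct, dotProduct_smul, smul_eq_mul, smul_eq_mul,
    ← mul_assoc, Real.sqrt_mul (by positivity), Real.sqrt_mul_self hc]

theorem sq_dotProduct_mulVec_le (hA : A.PosSemidef) (x y : Fin n → ℝ) :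
    (x ⬝ᵥ A *ᵥ y) ^ 2 ≤ (x ⬝ᵥ A *ᵥ x) * (y ⬝ᵥ A *ᵥ y) := by
  have h := (toBilin' A).apply_mul_apply_le_of_forall_zero_le
    (fun x => by simpa [toBilin'_apply'] using hA.dotProduct_mulVec_self_nonneg x) x y
  simpa only [toBilin'_apply', sq,
    dotProduct_mulVec_comm_of_isSymm hA.isSymm y x] using h

theorem dotProduct_mulVec_le_aN_mul_aN (hA : A.PosSemidef) (x y : Fin n → ℝ) :
    x ⬝ᵥ A *ᵥ y ≤ aN A x * aN A y := by
  rw [aN, aN, ← Real.sqrt_mul (hA.dotProduct_mulVec_self_nonneg x)]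
  exact (le_abs_self _).trans (Real.abs_le_sqrt (sq_dotProduct_mulVec_le hA x y))

theorem aN_le_sqrt_mul_aN (hA : A.PosSemidef) {x y : Fin n → ℝ} {c : ℝ}
    (h : x ⬝ᵥ A *ᵥ x ≤ c * (y ⬝ᵥ A *ᵥ y)) : aN A x ≤ Real.sqrt c * aN A y := by
  rw [aN, aN, ← Real.sqrt_mul' c (hA.dotProduct_mulVec_self_nonneg y)]
  exact Real.sqrt_le_sqrt h

theorem add_dotProduct_mulVec_add_of_orthogonal (hA : A.IsSymm) {x y : Fin n → ℝ}
    (h : x ⬝ᵥ A *ᵥ y = 0) :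
    (x + y) ⬝ᵥ A *ᵥ (x + y) = x ⬝ᵥ A *ᵥ x + y ⬝ᵥ A *ᵥ y := by
  rw [mulVec_add, dotProduct_add, add_dotProduct, add_dotProduct,
    dotProduct_mulVec_comm_of_isSymm hA y x, h]
  ring

theorem eq_zero_of_mem_span_of_orthogonal (hA : A.PosDef) {s : Set (Fin n → ℝ)}
    {z : Fin n → ℝ} (hz : z ∈ Submodule.span ℝ s) (h : ∀ v ∈ s, z ⬝ᵥ A *ᵥ v = 0) : z = 0 := by
  have hker : Submodule.span ℝ s ≤ LinearMap.ker (toBilin' A z) :=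
    Submodule.span_le.2 fun v hv => by simpa [toBilin'_apply'] using h v hv
  by_contra hz0
  exact (hA.dotProduct_mulVec_pos hz0).ne' (by simpa [toBilin'_apply'] using hker hz)

theorem pos_of_mulVec_eq_smul (hA : A.PosDef) {x : Fin n → ℝ} (hx : x ≠ 0) {θ : ℝ}
    (hθ : A *ᵥ x = θ • x) : 0 < θ := by
  have h := hA.dotProduct_mulVec_pos hx
  rw [hθ, star_trivial, dotProduct_smul, smul_eq_mul] at h
  exact pos_of_mul_pos_left h (dotProduct_self_star_nonneg x)

end EnergyInnerProduct

section Orthonormal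

variable {n : ℕ} {ι : Type*} [DecidableEq ι] {B : Matrix (Fin n) (Fin n) ℝ} {b : ι → Fin n → ℝ}

theorem sum_smul_dotProduct_mulVec (hb : ∀ i j, b i ⬝ᵥ B *ᵥ b j = if i = j then 1 else 0)
    (s : Finset ι) (a : ι → ℝ) (j : ι) :
    (∑ i ∈ s, a i • b i) ⬝ᵥ B *ᵥ b j = if j ∈ s then a j else 0 := by
  simp [sum_dotProduct, hb]

theorem sum_smul_dotProduct_mulVec_sum_smul
    (hb : ∀ i j, b i ⬝ᵥ B *ᵥ b j = if i = j then 1 else 0) (s : Finset ι) (a a' : ι → ℝ) :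
    (∑ i ∈ s, a i • b i) ⬝ᵥ B *ᵥ (∑ j ∈ s, a' j • b j) = ∑ i ∈ s, a i * a' i := by
  simp only [mulVec_sum, mulVec_smul, dotProduct_sum, dotProduct_smul,
    sum_smul_dotProduct_mulVec hb, smul_eq_mul]
  exact Finset.sum_congr rfl fun i hi => by rw [if_pos hi, mul_comm]

theorem linearIndependent_of_orthonormal [Fintype ι]
    (hb : ∀ i j, b i ⬝ᵥ B *ᵥ b j = if i = j then 1 else 0) : LinearIndependent ℝ b := by
  rw [Fintype.linearIndependent_iff]
  intro a ha j
  simpa [ha] using (sum_smul_dotProduct_mulVec hb Finset.univ a j).symm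

theorem span_range_eq_of_orthonormal {m : ℕ} {b : Fin m → Fin n → ℝ}
    (hb : ∀ i j, b i ⬝ᵥ B *ᵥ b j = if i = j then 1 else 0)
    {K : Submodule ℝ (Fin n → ℝ)} (hK : Module.finrank ℝ K = m) (hbK : ∀ i, b i ∈ K) :
    Submodule.span ℝ (Set.range b) = K := by
  refine Submodule.eq_of_le_of_finrank_le (Submodule.span_le.2 (Set.range_subset_iff.2 hbK)) ?_
  rw [hK, finrank_span_eq_card (linearIndependent_of_orthonormal hb), Fintype.card_fin]

end Orthonormal

structure IsEnergyProjection {n : ℕ} (A : Matrix (Fin n) (Fin n) ℝ)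
    (S : Submodule ℝ (Fin n → ℝ)) (Q : (Fin n → ℝ) →ₗ[ℝ] (Fin n → ℝ)) : Prop where
  mem : ∀ x, Q x ∈ S
  dotProduct_mulVec_eq : ∀ x, ∀ y ∈ S, Q x ⬝ᵥ A *ᵥ y = x ⬝ᵥ A *ᵥ y

namespace IsEnergyProjection

variable {n : ℕ} {A : Matrix (Fin n) (Fin n) ℝ} {S : Submodule ℝ (Fin n → ℝ)}
  {Q : (Fin n → ℝ) →ₗ[ℝ] (Fin n → ℝ)}

theorem sub_dotProduct_mulVec_eq_zero (hQ : IsEnergyProjection A S Q) (x : Fin n → ℝ)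
    {y : Fin n → ℝ} (hy : y ∈ S) : (x - Q x) ⬝ᵥ A *ᵥ y = 0 := by
  rw [sub_dotProduct, hQ.dotProduct_mulVec_eq x y hy, sub_self]

theorem eq_sum_of_orthonormal {ι : Type*} [DecidableEq ι] (hA : A.PosDef) {b : ι → Fin n → ℝ}
    (hb : ∀ i j, b i ⬝ᵥ A *ᵥ b j = if i = j then 1 else 0) {s : Finset ι}
    (hQ : IsEnergyProjection A (Submodule.span ℝ (b '' s)) Q) (x : Fin n → ℝ) :
    Q x = ∑ i ∈ s, (x ⬝ᵥ A *ᵥ b i) • b i := by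
  have hsum : ∑ i ∈ s, (x ⬝ᵥ A *ᵥ b i) • b i ∈ Submodule.span ℝ (b '' s) :=
    Submodule.sum_mem _ fun i hi => Submodule.smul_mem _ _ (Submodule.subset_span ⟨i, hi, rfl⟩)
  refine sub_eq_zero.1 (eq_zero_of_mem_span_of_orthogonal hA (sub_mem (hQ.mem x) hsum) ?_)
  rintro _ ⟨j, hj, rfl⟩
  rw [sub_dotProduct, hQ.dotProduct_mulVec_eq x _ (Submodule.subset_span ⟨j, hj, rfl⟩),
    sum_smul_dotProduct_mulVec hb, if_pos (Finset.mem_coe.1 hj), sub_self]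

theorem sub_eq_sum_compl {m : ℕ} (hA : A.PosDef) {b : Fin m → Fin n → ℝ}
    (hb : ∀ i j, b i ⬝ᵥ A *ᵥ b j = if i = j then 1 else 0) (hK : Module.finrank ℝ S = m)
    (hbS : ∀ i, b i ∈ S) (hQ : IsEnergyProjection A S Q) {s : Finset (Fin m)}
    {E : (Fin n → ℝ) →ₗ[ℝ] (Fin n → ℝ)} (hE : IsEnergyProjection A (Submodule.span ℝ (b '' s)) E)
    (x : Fin n → ℝ) : Q x - E x = ∑ i ∈ sᶜ, (x ⬝ᵥ A *ᵥ b i) • b i := by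
  have hQ' : IsEnergyProjection A (Submodule.span ℝ (b '' (Finset.univ : Finset (Fin m)))) Q := by
    rwa [Finset.coe_univ, Set.image_univ, span_range_eq_of_orthonormal hb hK hbS]
  rw [hQ'.eq_sum_of_orthonormal hA hb, hE.eq_sum_of_orthonormal hA hb,
    ← Finset.sum_compl_add_sum s, add_sub_cancel_right]

end IsEnergyProjection

section Eta

variable {n : ℕ} {A : Matrix (Fin n) (Fin n) ℝ}

theorem l2N_eq_norm (x : Fin n → ℝ) : l2N x = ‖WithLp.toLp 2 x‖ := by
  simp [l2N, EuclideanSpace.norm_eq, dotProduct, sq]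

theorem isCompact_setOf_l2N_eq_one : IsCompact {g : Fin n → ℝ | l2N g = 1} := by
  convert (isCompact_sphere (0 : EuclideanSpace ℝ (Fin n)) 1).image (PiLp.continuous_ofLp 2 _)
    using 1
  ext g
  simp only [Set.mem_ofPred_eq, l2N_eq_norm, Set.mem_image, mem_sphere_zero_iff_norm]
  exact ⟨fun h => ⟨_, h, rfl⟩, fun ⟨x, hx, hxg⟩ => hxg ▸ hx⟩

theorem le_etaK (P : (Fin n → ℝ) →ₗ[ℝ] (Fin n → ℝ)) {g : Fin n → ℝ} (hg : l2N g = 1) :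
    aN A (A⁻¹ *ᵥ g - P (A⁻¹ *ᵥ g)) ≤ etaK A P := by
  refine le_csSup (isCompact_setOf_l2N_eq_one.bddAbove_image ?_) ⟨g, hg, rfl⟩
  have := P.continuous_of_finiteDimensional
  unfold aN
  fun_prop

theorem aN_sub_le_etaK_mul_l2N (P : (Fin n → ℝ) →ₗ[ℝ] (Fin n → ℝ)) (g : Fin n → ℝ) :
    aN A (A⁻¹ *ᵥ g - P (A⁻¹ *ᵥ g)) ≤ etaK A P * l2N g := by
  rcases eq_or_ne g 0 with rfl | hg
  · simp [aN, l2N]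
  have ht : 0 < l2N g := by rw [l2N_eq_norm]; simpa using hg
  have hunit : l2N ((l2N g)⁻¹ • g) = 1 := by
    rw [l2N_eq_norm, WithLp.toLp_smul, norm_smul, ← l2N_eq_norm, norm_inv,
      Real.norm_of_nonneg ht.le, inv_mul_cancel₀ ht.ne']
  calc aN A (A⁻¹ *ᵥ g - P (A⁻¹ *ᵥ g))
      = l2N g * aN A (A⁻¹ *ᵥ ((l2N g)⁻¹ • g) - P (A⁻¹ *ᵥ ((l2N g)⁻¹ • g))) := by
        rw [← aN_smul ht.le, mulVec_smul, map_smul, ← smul_sub, smul_inv_smul₀ ht.ne']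
    _ ≤ l2N g * etaK A P := mul_le_mul_of_nonneg_left (le_etaK P hunit) ht.le
    _ = etaK A P * l2N g := mul_comm _ _

variable {K : Submodule ℝ (Fin n → ℝ)} {P : (Fin n → ℝ) →ₗ[ℝ] (Fin n → ℝ)} {w : Fin n → ℝ}

theorem dotProduct_le_etaK_mul (hA : A.PosDef) (hPK : ∀ x, P x ∈ K)
    (hw : ∀ v ∈ K, w ⬝ᵥ A *ᵥ v = 0) (g : Fin n → ℝ) :
    g ⬝ᵥ w ≤ etaK A P * l2N g * aN A w := by
  have hsymm := hA.posSemidef.isSymm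
  have hinv : A *ᵥ (A⁻¹ *ᵥ g) = g := by
    rw [mulVec_mulVec, mul_nonsing_inv _ ((A.isUnit_iff_isUnit_det).1 hA.isUnit), one_mulVec]
  calc g ⬝ᵥ w = (A⁻¹ *ᵥ g - P (A⁻¹ *ᵥ g)) ⬝ᵥ A *ᵥ w := by
        rw [sub_dotProduct, dotProduct_mulVec_comm_of_isSymm hsymm (P _), hw _ (hPK _), sub_zero,
          dotProduct_mulVec_comm_of_isSymm hsymm, hinv, dotProduct_comm]
    _ ≤ aN A (A⁻¹ *ᵥ g - P (A⁻¹ *ᵥ g)) * aN A w :=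
        dotProduct_mulVec_le_aN_mul_aN hA.posSemidef _ _
    _ ≤ etaK A P * l2N g * aN A w :=
        mul_le_mul_of_nonneg_right (aN_sub_le_etaK_mul_l2N P g) (Real.sqrt_nonneg _)

theorem sum_sq_dotProduct_le_etaK_sq (hA : A.PosDef) (hPK : ∀ x, P x ∈ K)
    (hw : ∀ v ∈ K, w ⬝ᵥ A *ᵥ v = 0) {ι : Type*} [DecidableEq ι] {e : ι → Fin n → ℝ}
    (he : ∀ i j, e i ⬝ᵥ e j = if i = j then 1 else 0) (s : Finset ι) :
    ∑ i ∈ s, (e i ⬝ᵥ w) ^ 2 ≤ etaK A P ^ 2 * aN A w ^ 2 := by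
  set T := ∑ i ∈ s, (e i ⬝ᵥ w) ^ 2
  set g := ∑ i ∈ s, (e i ⬝ᵥ w) • e i
  have hgw : g ⬝ᵥ w = T := by simp [g, T, sum_dotProduct, sq]
  have hg : l2N g = Real.sqrt T := by
    have he' : ∀ i j, e i ⬝ᵥ 1 *ᵥ e j = if i = j then 1 else 0 := by simpa using he
    have h := sum_smul_dotProduct_mulVec_sum_smul he' s (fun i => e i ⬝ᵥ w) (fun i => e i ⬝ᵥ w)
    rw [l2N]
    congr 1
    simpa [g, T, sq] using h
  have key : Real.sqrt T * Real.sqrt T ≤ etaK A P * aN A w * Real.sqrt T := by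
    rw [Real.mul_self_sqrt (by positivity), ← hg, mul_right_comm, ← hgw]
    exact dotProduct_le_etaK_mul hA hPK hw g
  rcases (Real.sqrt_nonneg T).eq_or_lt with h0 | hpos
  · rw [(Real.sqrt_eq_zero (by positivity)).1 h0.symm]
    positivity
  · calc T = Real.sqrt T ^ 2 := (Real.sq_sqrt (by positivity)).symm
      _ ≤ (etaK A P * aN A w) ^ 2 :=
          pow_le_pow_left₀ (Real.sqrt_nonneg _) (le_of_mul_le_mul_right key hpos) 2
      _ = etaK A P ^ 2 * aN A w ^ 2 := mul_pow _ _ _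

end Eta

theorem sq_le_of_le_abs_of_le {c a δ t₀ t : ℝ} (hδ : 0 < δ) (ha : δ ≤ |a|) (ht₀ : 0 < t₀)
    (ht : t₀ ≤ t) : c ^ 2 ≤ 1 / t₀ / δ ^ 2 * (t * (c * a) ^ 2) := by
  have hδa : δ ^ 2 ≤ a ^ 2 := by simpa using pow_le_pow_left₀ hδ.le ha 2
  rw [div_div, one_div_mul_eq_div, le_div_iff₀ (by positivity)]
  calc c ^ 2 * (t₀ * δ ^ 2) ≤ c ^ 2 * (t * a ^ 2) := by gcongr; linarith
    _ = t * (c * a) ^ 2 := by ring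

section Ritz

variable {n : ℕ} {A : Matrix (Fin n) (Fin n) ℝ} {K : Submodule ℝ (Fin n → ℝ)}
  {ι : Type*} {tlam : ι → ℝ} {tu : ι → Fin n → ℝ}

theorem dotProduct_mulVec_ritz (hRitz : ∀ j, ∀ v ∈ K, (A *ᵥ tu j - tlam j • tu j) ⬝ᵥ v = 0)
    (j : ι) {v : Fin n → ℝ} (hv : v ∈ K) : v ⬝ᵥ A *ᵥ tu j = tlam j * (tu j ⬝ᵥ v) := by
  have h := hRitz j v hv
  rwa [sub_dotProduct, smul_dotProduct, smul_eq_mul, sub_eq_zero, dotProduct_comm] at h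

theorem ritz_value_pos [DecidableEq ι]
    (hRitz : ∀ j, ∀ v ∈ K, (A *ᵥ tu j - tlam j • tu j) ⬝ᵥ v = 0)
    (htu : ∀ j, tu j ∈ K) (hortho : ∀ i j, tu i ⬝ᵥ A *ᵥ tu j = if i = j then 1 else 0)
    (j : ι) : 0 < tlam j := by
  have h := dotProduct_mulVec_ritz hRitz j (htu j)
  rw [hortho, if_pos rfl] at h
  exact pos_of_mul_pos_left (h ▸ one_pos) (by simpa using dotProduct_self_star_nonneg (tu j))

theorem dotProduct_sqrt_smul_ritz [DecidableEq ι]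
    (hRitz : ∀ j, ∀ v ∈ K, (A *ᵥ tu j - tlam j • tu j) ⬝ᵥ v = 0)
    (htu : ∀ j, tu j ∈ K) (hortho : ∀ i j, tu i ⬝ᵥ A *ᵥ tu j = if i = j then 1 else 0)
    (i j : ι) :
    (Real.sqrt (tlam i) • tu i) ⬝ᵥ (Real.sqrt (tlam j) • tu j) = if i = j then 1 else 0 := by
  have h := dotProduct_mulVec_ritz hRitz i (htu j)
  have hpos := ritz_value_pos hRitz htu hortho i
  rw [hortho] at h
  rw [smul_dotProduct, dotProduct_smul, smul_eq_mul, smul_eq_mul]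
  split_ifs at h ⊢ with hji hij hij
  · subst hji
    rw [← mul_assoc, Real.mul_self_sqrt hpos.le, ← h]
  · exact absurd hji.symm hij
  · exact absurd hij.symm hji
  · rw [(mul_eq_zero.1 h.symm).resolve_left hpos.ne', mul_zero, mul_zero]

theorem ritz_dotProduct_sub_proj (hA : A.IsSymm) {P : (Fin n → ℝ) →ₗ[ℝ] (Fin n → ℝ)}
    (hP : IsEnergyProjection A K P)
    (hRitz : ∀ j, ∀ v ∈ K, (A *ᵥ tu j - tlam j • tu j) ⬝ᵥ v = 0) (htu : ∀ j, tu j ∈ K)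
    {x : Fin n → ℝ} {θ : ℝ} (hx : A *ᵥ x = θ • x) (hθ : θ ≠ 0) (j : ι) (htj : tlam j ≠ 0) :
    tu j ⬝ᵥ (x - P x) = (x ⬝ᵥ A *ᵥ tu j) * (1 / θ - 1 / tlam j) := by
  have hx' : tu j ⬝ᵥ x = (x ⬝ᵥ A *ᵥ tu j) / θ := by
    rw [← dotProduct_mulVec_comm_of_isSymm hA, hx, dotProduct_smul, smul_eq_mul,
      mul_div_cancel_left₀ _ hθ]
  have hPx : tu j ⬝ᵥ P x = (x ⬝ᵥ A *ᵥ tu j) / tlam j := by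
    rw [← hP.dotProduct_mulVec_eq x _ (htu j), dotProduct_mulVec_ritz hRitz j (hP.mem x),
      mul_div_cancel_left₀ _ htj]
  rw [dotProduct_sub, hx', hPx]
  ring

theorem sum_sq_dotProduct_mulVec_ritz_le [DecidableEq ι] (hA : A.PosDef)
    {P : (Fin n → ℝ) →ₗ[ℝ] (Fin n → ℝ)} (hP : IsEnergyProjection A K P)
    (hRitz : ∀ j, ∀ v ∈ K, (A *ᵥ tu j - tlam j • tu j) ⬝ᵥ v = 0) (htu : ∀ j, tu j ∈ K)
    (hortho : ∀ i j, tu i ⬝ᵥ A *ᵥ tu j = if i = j then 1 else 0)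
    {x : Fin n → ℝ} {θ : ℝ} (hx : A *ᵥ x = θ • x) (hθ : θ ≠ 0) {s : Finset ι} {t₀ δ : ℝ}
    (ht₀ : 0 < t₀) (hts : ∀ j ∈ s, t₀ ≤ tlam j) (hδ : 0 < δ)
    (hgap : ∀ j ∈ s, δ ≤ |1 / tlam j - 1 / θ|) :
    ∑ j ∈ s, (x ⬝ᵥ A *ᵥ tu j) ^ 2 ≤ 1 / t₀ / δ ^ 2 * etaK A P ^ 2 * aN A (x - P x) ^ 2 := by
  have hpos := ritz_value_pos hRitz htu hortho
  calc ∑ j ∈ s, (x ⬝ᵥ A *ᵥ tu j) ^ 2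
      ≤ ∑ j ∈ s, 1 / t₀ / δ ^ 2 * (tlam j * ((x ⬝ᵥ A *ᵥ tu j) * (1 / θ - 1 / tlam j)) ^ 2) :=
        Finset.sum_le_sum fun j hj => sq_le_of_le_abs_of_le hδ
          (abs_sub_comm (1 / tlam j) (1 / θ) ▸ hgap j hj) ht₀ (hts j hj)
    _ = 1 / t₀ / δ ^ 2 * ∑ j ∈ s, ((Real.sqrt (tlam j) • tu j) ⬝ᵥ (x - P x)) ^ 2 := by
        rw [Finset.mul_sum]
        refine Finset.sum_congr rfl fun j _ => ?_
        rw [smul_dotProduct, ritz_dotProduct_sub_proj hA.posSemidef.isSymm hP hRitz htu hx hθ j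
          (hpos j).ne', smul_eq_mul, mul_pow (Real.sqrt _), Real.sq_sqrt (hpos j).le]
    _ ≤ 1 / t₀ / δ ^ 2 * (etaK A P ^ 2 * aN A (x - P x) ^ 2) := by
        gcongr
        exact sum_sq_dotProduct_le_etaK_sq hA hP.mem
          (fun v hv => hP.sub_dotProduct_mulVec_eq_zero x hv)
          (dotProduct_sqrt_smul_ritz hRitz htu hortho) s
    _ = 1 / t₀ / δ ^ 2 * etaK A P ^ 2 * aN A (x - P x) ^ 2 := by ring

end Ritz

theorem stmt5_general {n m : ℕ} (A : Matrix (Fin n) (Fin n) ℝ) (hA : A.PosDef)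
    -- `K` is an `m`-dimensional subspace of `ℝⁿ`
    (K : Submodule ℝ (Fin n → ℝ)) (hK : Module.finrank ℝ K = m)
    -- `P` is the `A`-orthogonal (Galerkin) projection onto `K`
    (P : (Fin n → ℝ) →ₗ[ℝ] (Fin n → ℝ))
    (hPmem : ∀ x, P x ∈ K)
    (hPproj : ∀ x, ∀ y ∈ K, (P x) ⬝ᵥ (A *ᵥ y) = x ⬝ᵥ (A *ᵥ y))
    -- the Ritz pairs `(λ̃_j, ũ_j)` of `A` on `K`, with `A`-orthonormal Ritz vectors
    (tlam : Fin m → ℝ) (tu : Fin m → (Fin n → ℝ)) (htmono : Monotone tlam)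
    (htu : ∀ j, tu j ∈ K)
    (hRitz : ∀ j, ∀ v ∈ K, ((A *ᵥ tu j) - tlam j • tu j) ⬝ᵥ v = 0)
    (htortho : ∀ i j, tu i ⬝ᵥ (A *ᵥ tu j) = if i = j then (1 : ℝ) else 0)
    -- `1 ≤ k < m`
    (k : ℕ) (hkm : k < m)
    -- `(λ_1, u_1), …, (λ_k, u_k)` are exact eigenpairs of `A` with `λ_1 ≤ ⋯ ≤ λ_k`
    (lam : Fin k → ℝ) (u : Fin k → (Fin n → ℝ))
    (hu : ∀ i, u i ≠ 0) (heig : ∀ i, A *ᵥ u i = lam i • u i)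
    -- `δ_{k,i} > 0` is (a lower bound for) `min_{k < j ≤ m} |μ̃_j − μ_i|`,
    -- where `μ_i = 1/λ_i`, `μ̃_j = 1/λ̃_j`
    (δ : Fin k → ℝ) (hδpos : ∀ i, 0 < δ i)
    (hδ : ∀ (i : Fin k) (j : Fin m), k ≤ (j : ℕ) → δ i ≤ |1 / tlam j - 1 / lam i|)
    -- `E` is the `A`-orthogonal projection `E_{m,k}` onto `span{ũ_1, …, ũ_k}`
    (E : (Fin n → ℝ) →ₗ[ℝ] (Fin n → ℝ))
    (hEmem : ∀ x, E x ∈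
      Submodule.span ℝ (Set.range fun i : Fin k => tu (Fin.castLE hkm.le i)))
    (hEproj : ∀ x, ∀ y ∈
      Submodule.span ℝ (Set.range fun i : Fin k => tu (Fin.castLE hkm.le i)),
      (E x) ⬝ᵥ (A *ᵥ y) = x ⬝ᵥ (A *ᵥ y)) :
    ∀ i : Fin k, aN A (u i - E (u i)) ≤
      Real.sqrt (1 + (1 / tlam ⟨k, hkm⟩) / (δ i) ^ 2 * (etaK A P) ^ 2) *
        aN A (u i - P (u i)) := by
  intro i
  have hP : IsEnergyProjection A K P := ⟨hPmem, hPproj⟩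
  set s : Finset (Fin m) := Finset.univ.filter fun j => (j : ℕ) < k
  have hE : IsEnergyProjection A (Submodule.span ℝ (tu '' s)) E := by
    have hrange : Set.range (fun j : Fin k => tu (Fin.castLE hkm.le j)) = tu '' s := by
      simp [s, Set.range_comp', Fin.range_castLE]
    exact hrange ▸ ⟨hEmem, hEproj⟩
  have hcompl : ∀ j ∈ sᶜ, k ≤ (j : ℕ) := fun j hj => by simpa [s] using hj
  set c : Fin m → ℝ := fun j => u i ⬝ᵥ A *ᵥ tu j
  set w := u i - P (u i)
  have hsplit : u i - E (u i) = w + ∑ j ∈ sᶜ, c j • tu j := by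
    rw [← hP.sub_eq_sum_compl hA htortho hK htu hE, sub_add_sub_cancel]
  have horth : w ⬝ᵥ A *ᵥ ∑ j ∈ sᶜ, c j • tu j = 0 :=
    hP.sub_dotProduct_mulVec_eq_zero _ (Submodule.sum_mem _ fun j _ => K.smul_mem _ (htu j))
  have htail := sum_sq_dotProduct_mulVec_ritz_le hA hP hRitz htu htortho (heig i)
    (pos_of_mulVec_eq_smul hA (hu i) (heig i)).ne' (ritz_value_pos hRitz htu htortho ⟨k, hkm⟩)
    (fun j hj => htmono (hcompl j hj)) (hδpos i) (fun j hj => hδ i j (hcompl j hj))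
  refine aN_le_sqrt_mul_aN hA.posSemidef ?_
  rw [hsplit, add_dotProduct_mulVec_add_of_orthogonal hA.posSemidef.isSymm horth,
    sum_smul_dotProduct_mulVec_sum_smul htortho, ← aN_sq hA.posSemidef w]
  simp only [← sq]
  linear_combination htail

/-- Energy-norm error estimate for the first `k` eigenvector approximations
(first part of Theorem 3.2):
`‖u_i − E_{m,k} u_i‖_A ≤ √(1 + (μ̃_{k+1}/δ_{k,i}²) η_K²) ‖(I − P_K) u_i‖_A`. -/
theorem stmt5 {n m : ℕ} (A : Matrix (Fin n) (Fin n) ℝ) (hA : A.PosDef)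
    -- `K` is an `m`-dimensional subspace of `ℝⁿ`
    (K : Submodule ℝ (Fin n → ℝ)) (hK : Module.finrank ℝ K = m)
    -- `P` is the `A`-orthogonal (Galerkin) projection onto `K`
    (P : (Fin n → ℝ) →ₗ[ℝ] (Fin n → ℝ))
    (hPmem : ∀ x, P x ∈ K)
    (hPproj : ∀ x, ∀ y ∈ K, (P x) ⬝ᵥ (A *ᵥ y) = x ⬝ᵥ (A *ᵥ y))
    -- the Ritz pairs `(λ̃_j, ũ_j)` of `A` on `K`, with `A`-orthonormal Ritz vectors
    (tlam : Fin m → ℝ) (tu : Fin m → (Fin n → ℝ)) (htmono : Monotone tlam)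
    (htu : ∀ j, tu j ∈ K)
    (hRitz : ∀ j, ∀ v ∈ K, ((A *ᵥ tu j) - tlam j • tu j) ⬝ᵥ v = 0)
    (htortho : ∀ i j, tu i ⬝ᵥ (A *ᵥ tu j) = if i = j then (1 : ℝ) else 0)
    -- `1 ≤ k < m`
    (k : ℕ) (hk : 1 ≤ k) (hkm : k < m)
    -- `(λ_1, u_1), …, (λ_k, u_k)` are exact eigenpairs of `A` with `λ_1 ≤ ⋯ ≤ λ_k`
    (lam : Fin k → ℝ) (u : Fin k → (Fin n → ℝ)) (hlmono : Monotone lam)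
    (hu : ∀ i, u i ≠ 0) (heig : ∀ i, A *ᵥ u i = lam i • u i)
    -- `δ_{k,i} > 0` is (a lower bound for) `min_{k < j ≤ m} |μ̃_j − μ_i|`,
    -- where `μ_i = 1/λ_i`, `μ̃_j = 1/λ̃_j`
    (δ : Fin k → ℝ) (hδpos : ∀ i, 0 < δ i)
    (hδ : ∀ (i : Fin k) (j : Fin m), k ≤ (j : ℕ) → δ i ≤ |1 / tlam j - 1 / lam i|)
    -- `E` is the `A`-orthogonal projection `E_{m,k}` onto `span{ũ_1, …, ũ_k}`
    (E : (Fin n → ℝ) →ₗ[ℝ] (Fin n → ℝ))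
    (hEmem : ∀ x, E x ∈
      Submodule.span ℝ (Set.range fun i : Fin k => tu (Fin.castLE hkm.le i)))
    (hEproj : ∀ x, ∀ y ∈
      Submodule.span ℝ (Set.range fun i : Fin k => tu (Fin.castLE hkm.le i)),
      (E x) ⬝ᵥ (A *ᵥ y) = x ⬝ᵥ (A *ᵥ y)) :
    ∀ i : Fin k, aN A (u i - E (u i)) ≤
      Real.sqrt (1 + (1 / tlam ⟨k, hkm⟩) / (δ i) ^ 2 * (etaK A P) ^ 2) *
        aN A (u i - P (u i)) :=
  stmt5_general A hA K hK P hPmem hPproj tlam tu htmono htu hRitz htortho k hkm lam u hu heig δ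
    hδpos hδ E hEmem hEproj
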